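/- Let u be a plurisubharmonic function on a polydisc Δⁿ ⊂ ℂⁿ (n ≥ 2) whose restriction to the complement of the cone C = {z : |z_n| ≤ max(|z₁|,…,|z_{n−1}|)} is bounded above by M on an annular region {z ∈ Δⁿ : 1/2 ≤ max_i |z_i| ≤ 3/4} ∖ C. Then u ≤ M on a neighborhood of 0. In particular, a plurisubharmonic function on Δⁿ ∖ C that is locally bounded above outside C is bounded above near 0. -/

import Mathlib

/-!
For `z` with all coordinates below `1/8`, the circle `ζ ↦ z + ζ eₙ`, `|ζ| = 5/8`, stays in the
unit polydisc, and on it `|z_n| ∈ [1/2, 3/4]` strictly dominates the other coordinates, so the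
circle lies in the annulus outside the cone `C` where `u ≤ M`. The maximum principle for the
subharmonic slice `ζ ↦ u(z + ζ eₙ)` then gives `u(z) ≤ M`.
-/

open Set Metric Filter MeasureTheory

noncomputable section

/-- Plurisubharmonicity (values in `EReal`) on a set `U ⊆ ℂⁿ`. -/
def PSHOn {n : ℕ} (u : EuclideanSpace ℂ (Fin n) → EReal)
    (U : Set (EuclideanSpace ℂ (Fin n))) : Prop :=
  UpperSemicontinuousOn u U ∧
  ∀ z ∈ U, ∀ v : EuclideanSpace ℂ (Fin n), ∀ r : ℝ, 0 < r →
    (∀ w : ℂ, ‖w‖ ≤ r → z + w • v ∈ U) →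
    ∀ h : ℝ → ℝ, Continuous h →
      (∀ θ : ℝ, u (z + ((r : ℂ) * Complex.exp (θ * Complex.I)) • v) ≤ ((h θ : ℝ) : EReal)) →
      u z ≤ (((1 / (2 * Real.pi)) * ∫ θ in (0:ℝ)..(2 * Real.pi), h θ : ℝ) : EReal)

theorem PSHOn.le_of_forall_circle_le {n : ℕ} {u : EuclideanSpace ℂ (Fin n) → EReal}
    {U : Set (EuclideanSpace ℂ (Fin n))} (hu : PSHOn u U) {z v : EuclideanSpace ℂ (Fin n)}
    (hz : z ∈ U) {r : ℝ} (hr : 0 < r) (hdisc : ∀ w : ℂ, ‖w‖ ≤ r → z + w • v ∈ U) {M : ℝ}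
    (hcircle : ∀ w : ℂ, ‖w‖ = r → u (z + w • v) ≤ M) : u z ≤ M := by
  have hmean := hu.2 z hz v r hr hdisc (fun _ => M) continuous_const fun θ =>
    hcircle _ (by simp [Complex.norm_exp_ofReal_mul_I, hr.le])
  have hconst : (1 / (2 * Real.pi)) * ∫ _ in (0:ℝ)..(2 * Real.pi), M = M := by
    rw [intervalIntegral.integral_const, smul_eq_mul]
    field_simp [Real.pi_ne_zero]
    ring
  rwa [hconst] at hmean

section SliceCoordinates

variable {ι : Type*} [DecidableEq ι]
  (z : EuclideanSpace ℂ ι) (j : ι) (w : ℂ)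

theorem add_smul_single_apply_self : (z + w • EuclideanSpace.single j (1 : ℂ)) j = z j + w := by
  simp

theorem add_smul_single_apply_of_ne {i : ι} (hij : i ≠ j) :
    (z + w • EuclideanSpace.single j (1 : ℂ)) i = z i := by
  simp [hij]

theorem norm_add_smul_single_apply_le (i : ι) :
    ‖(z + w • EuclideanSpace.single j (1 : ℂ)) i‖ ≤ ‖z i‖ + ‖w‖ := by
  rcases eq_or_ne i j with rfl | hij
  · rw [add_smul_single_apply_self]
    exact norm_add_le _ _
  · rw [add_smul_single_apply_of_ne z j w hij]
    exact le_add_of_nonneg_right (norm_nonneg w)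

end SliceCoordinates

theorem ciSup_eq_of_forall_le_apply {ι : Type*} [Finite ι] {f : ι → ℝ} {j : ι}
    (h : ∀ i, f i ≤ f j) : ⨆ i, f i = f j := by
  have : Nonempty ι := ⟨j⟩
  exact le_antisymm (ciSup_le h) (le_ciSup (Set.finite_range f).bddAbove j)

theorem norm_add_smul_single_bounds_of_forall_norm_lt {ι : Type*} [Finite ι] [DecidableEq ι]
    {z : EuclideanSpace ℂ ι} (hz : ∀ i, ‖z i‖ < 1 / 8) (j : ι) {w : ℂ} (hw : ‖w‖ = 5 / 8) :
    let p := z + w • EuclideanSpace.single j (1 : ℂ)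
    (⨆ i, ‖p i‖) = ‖p j‖ ∧ 1 / 2 ≤ ‖p j‖ ∧ ‖p j‖ ≤ 3 / 4 ∧ ∀ i ≠ j, ‖p i‖ < 1 / 8 := by
  intro p
  have hother : ∀ i ≠ j, ‖p i‖ < 1 / 8 := fun i hij => by
    simpa only [p, add_smul_single_apply_of_ne z j w hij] using hz i
  have hlower : 1 / 2 ≤ ‖p j‖ := by
    have := norm_sub_norm_le w (-z j)
    rw [norm_neg, sub_neg_eq_add, add_comm] at this
    simp only [p, add_smul_single_apply_self]
    linarith [hz j]
  refine ⟨ciSup_eq_of_forall_le_apply fun i => ?_, hlower, ?_, hother⟩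
  · rcases eq_or_ne i j with rfl | hij
    · exact le_rfl
    · linarith [hother i hij]
  · linarith [norm_add_smul_single_apply_le z j w j, hz j]

/-- A psh function on the unit polydisc which is `≤ M` on the part of the
annulus `{1/2 ≤ max |z_i| ≤ 3/4}` lying outside the cone
`C = {|z_n| ≤ max(|z₁|,…,|z_{n−1}|)}` satisfies `u ≤ M` near `0`. -/
theorem stmt10 {n : ℕ} (hn : 2 ≤ n) (M : ℝ)
    (u : EuclideanSpace ℂ (Fin n) → EReal)
    (hu : PSHOn u {z | ∀ i, ‖z i‖ < 1})
    (hbd : ∀ z : EuclideanSpace ℂ (Fin n),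
      (1 / 2 ≤ ⨆ i, ‖z i‖) → ((⨆ i, ‖z i‖) ≤ 3 / 4) →
      ¬ (∃ i : Fin n, i ≠ ⟨n - 1, by omega⟩ ∧
          ‖z ⟨n - 1, by omega⟩‖ ≤ ‖z i‖) →
      u z ≤ (M : EReal)) :
    ∃ ε : ℝ, 0 < ε ∧ ∀ z : EuclideanSpace ℂ (Fin n), ‖z‖ < ε → u z ≤ (M : EReal) := by
  refine ⟨1 / 8, by norm_num, fun z hz => ?_⟩
  have hsmall : ∀ i, ‖z i‖ < 1 / 8 := fun i => (PiLp.norm_apply_le z i).trans_lt hz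
  refine hu.le_of_forall_circle_le (v := EuclideanSpace.single ⟨n - 1, by omega⟩ 1)
    (fun i => (hsmall i).trans (by norm_num)) (r := 5 / 8) (by norm_num) ?_ ?_
  · intro w hw i
    linarith [norm_add_smul_single_apply_le z ⟨n - 1, by omega⟩ w i, hsmall i]
  · intro w hw
    obtain ⟨hsup, hlower, hupper, hother⟩ := norm_add_smul_single_bounds_of_forall_norm_lt hsmall _ hw
    refine hbd _ (hsup ▸ hlower) (hsup ▸ hupper) ?_
    rintro ⟨i, hij, hle⟩
    linarith [hother i hij]
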